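/- arXiv:1910.06127 — 2 statements merged into one kernel-verified Lean document; each statement's English description precedes it below -/
import Mathlib

section
/- The normal-approximation throughput Ψ(z) = Σᵢ log₂(1+zᵢ) − Q⁻¹(ε)·√(Σᵢ a²(1−(1+zᵢ)^{−2})) is a difference of two functions, each of which is concave and nondecreasing in z on (0,∞)ⁿ, provided Q⁻¹(ε) > 0. -/
/-!
`F` and the sum under the root in `V` are separable: their terms `x ↦ log₂ (1 + x)` and
`x ↦ a² (1 - (1 + x)⁻²)` are concave and nondecreasing in one variable for `x > -1`, and a
sum of such one-coordinate terms is concave and nondecreasing on the orthant. Since the square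
root is concave and nondecreasing on `[0, ∞)`, composing it with that nonnegative inner sum
keeps both properties.
-/

open Real Set

section

variable {E : Type*} [AddCommGroup E] [Module ℝ E] {s : Set E}

theorem concaveOn_sum {ι : Type*} (hs : Convex ℝ s) (t : Finset ι) {f : ι → E → ℝ}
    (hf : ∀ i ∈ t, ConcaveOn ℝ s (f i)) : ConcaveOn ℝ s fun x => ∑ i ∈ t, f i x := by
  classical
  induction t using Finset.induction with
  | empty => simpa using concaveOn_const 0 hs
  | insert j t hj ih =>
    simp only [Finset.sum_insert hj]
    exact (hf j (Finset.mem_insert_self j t)).add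
      (ih fun i hi => hf i (Finset.mem_insert_of_mem hi))

theorem ConcaveOn.sqrt {f : E → ℝ} (hf : ConcaveOn ℝ s f) (hf₀ : ∀ x ∈ s, 0 ≤ f x) :
    ConcaveOn ℝ s fun x => √(f x) := by
  refine ⟨hf.1, fun x hx y hy α β hα hβ hαβ => ?_⟩
  calc α • √(f x) + β • √(f y) ≤ √(α • f x + β • f y) :=
        strictConcaveOn_sqrt.concaveOn.2 (hf₀ x hx) (hf₀ y hy) hα hβ hαβ
    _ ≤ √(f (α • x + β • y)) := sqrt_le_sqrt (hf.2 hx hy hα hβ hαβ)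

end

section

variable {ι : Type*} [Fintype ι] {s : Set ℝ} {φ : ι → ℝ → ℝ}

theorem concaveOn_univ_pi_sum (hs : Convex ℝ s) (hφ : ∀ i, ConcaveOn ℝ s (φ i)) :
    ConcaveOn ℝ (univ.pi fun _ => s) fun z : ι → ℝ => ∑ i, φ i (z i) :=
  concaveOn_sum (convex_pi fun _ _ => hs) _ fun i _ =>
    ((hφ i).comp_linearMap (LinearMap.proj (R := ℝ) (φ := fun _ : ι => ℝ) i)).subset
      (fun _ hz => mem_univ_pi.1 hz i) (convex_pi fun _ _ => hs)

theorem monotoneOn_univ_pi_sum (hφ : ∀ i, MonotoneOn (φ i) s) :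
    MonotoneOn (fun z : ι → ℝ => ∑ i, φ i (z i)) (univ.pi fun _ => s) :=
  fun _ hz _ hw hzw => Finset.sum_le_sum fun i _ =>
    hφ i (mem_univ_pi.1 hz i) (mem_univ_pi.1 hw i) (hzw i)

end

theorem concaveOn_logb_one_add {b : ℝ} (hb : 1 < b) :
    ConcaveOn ℝ (Ioi (-1)) fun x => logb b (1 + x) := by
  have h := (strictConcaveOn_log_Ioi.concaveOn.translate_right 1).smul
    (inv_nonneg.2 (log_nonneg hb.le))
  rw [preimage_const_add_Ioi, zero_sub] at h
  refine h.congr fun x _ => ?_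
  simp [logb, div_eq_inv_mul]

theorem monotoneOn_logb_one_add {b : ℝ} (hb : 1 < b) :
    MonotoneOn (fun x => logb b (1 + x)) (Ioi (-1)) := fun x hx _ _ hxy =>
  logb_le_logb_of_le hb (by linarith [mem_Ioi.1 hx]) (by linarith)

theorem concaveOn_one_sub_inv_one_add_sq :
    ConcaveOn ℝ (Ioi (-1)) fun x : ℝ => 1 - ((1 + x) ^ 2)⁻¹ := by
  have h := ((convexOn_zpow (-2)).translate_right (1 : ℝ)).neg.add_const 1
  rw [preimage_const_add_Ioi, zero_sub] at h
  refine h.congr fun x _ => ?_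
  simp [zpow_neg, sub_eq_neg_add]

theorem monotoneOn_one_sub_inv_one_add_sq :
    MonotoneOn (fun x : ℝ => 1 - ((1 + x) ^ 2)⁻¹) (Ioi (-1)) := by
  intro x hx y _ hxy
  have hx' : 0 < 1 + x := by linarith [mem_Ioi.1 hx]
  have : ((1 + y) ^ 2)⁻¹ ≤ ((1 + x) ^ 2)⁻¹ :=
    inv_anti₀ (by positivity) (pow_le_pow_left₀ hx'.le (by linarith) 2)
  linarith

theorem one_sub_inv_one_add_sq_nonneg {x : ℝ} (hx : 0 ≤ x) : 0 ≤ 1 - ((1 + x) ^ 2)⁻¹ :=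
  sub_nonneg.2 (inv_le_one_of_one_le₀ (one_le_pow₀ (by linarith)))

theorem throughput_difference_of_concave_monotone_general (n : ℕ) (qinv a : ℝ)
    (hq : 0 < qinv)
    (F V : (Fin n → ℝ) → ℝ)
    (hF : F = fun z => ∑ i, Real.logb 2 (1 + z i))
    (hV : V = fun z => qinv * Real.sqrt (∑ i, a ^ 2 * (1 - ((1 + z i) ^ 2)⁻¹)))
    (S : Set (Fin n → ℝ)) (hS : S = {z | ∀ i, 0 < z i}) :
    ConcaveOn ℝ S F ∧ MonotoneOn F S ∧
    ConcaveOn ℝ S V ∧ MonotoneOn V S := by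
  obtain rfl : S = univ.pi fun _ => Ioi 0 := by ext; simp [hS]
  subst hF hV
  have hpos : Ioi (0 : ℝ) ⊆ Ioi (-1) := Ioi_subset_Ioi (by norm_num)
  have hinner := concaveOn_univ_pi_sum (ι := Fin n) (convex_Ioi 0) fun _ =>
    (concaveOn_one_sub_inv_one_add_sq.subset hpos (convex_Ioi 0)).smul (sq_nonneg a)
  have hinner_mono := monotoneOn_univ_pi_sum (ι := Fin n) fun _ =>
    (monotone_mul_left_of_nonneg (sq_nonneg a)).comp_monotoneOn
      (monotoneOn_one_sub_inv_one_add_sq.mono hpos)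
  have hinner_nonneg : ∀ z ∈ univ.pi fun _ : Fin n => Ioi (0 : ℝ),
      0 ≤ ∑ i, a ^ 2 * (1 - ((1 + z i) ^ 2)⁻¹) := fun z hz =>
    Finset.sum_nonneg fun i _ =>
      mul_nonneg (sq_nonneg a) (one_sub_inv_one_add_sq_nonneg (mem_univ_pi.1 hz i).le)
  refine ⟨concaveOn_univ_pi_sum (convex_Ioi 0) fun _ =>
      (concaveOn_logb_one_add one_lt_two).subset hpos (convex_Ioi 0),
    monotoneOn_univ_pi_sum fun _ => (monotoneOn_logb_one_add one_lt_two).mono hpos,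
    (hinner.sqrt hinner_nonneg).smul hq.le,
    (monotone_mul_left_of_nonneg hq.le).comp_monotoneOn
      (sqrt_monotone.comp_monotoneOn hinner_mono)⟩

/-- The normal-approximation throughput Ψ(z) = F(z) − V(z), with
F(z) = Σᵢ log₂(1+zᵢ) and V(z) = Q⁻¹(ε)·√(Σᵢ a²(1−(1+zᵢ)⁻²)) (a = log₂ e,
Q⁻¹(ε) > 0), is a difference of two functions each concave and coordinatewise
nondecreasing on the positive orthant. -/
theorem throughput_difference_of_concave_monotone (n : ℕ) (qinv a : ℝ)
    (hq : 0 < qinv) (ha : a = Real.logb 2 (Real.exp 1))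
    (F V : (Fin n → ℝ) → ℝ)
    (hF : F = fun z => ∑ i, Real.logb 2 (1 + z i))
    (hV : V = fun z => qinv * Real.sqrt (∑ i, a ^ 2 * (1 - ((1 + z i) ^ 2)⁻¹)))
    (S : Set (Fin n → ℝ)) (hS : S = {z | ∀ i, 0 < z i}) :
    ConcaveOn ℝ S F ∧ MonotoneOn F S ∧
    ConcaveOn ℝ S V ∧ MonotoneOn V S :=
  throughput_difference_of_concave_monotone_general n qinv a hq F V hF hV S hS
end

section
/- If W, Y are Hermitian positive semi-definite matrices with Y·W = 0 and (α+η)I = θH + Y where α+η > 0, θ ≥ 0, and rank(H) ≤ 1, then rank(W) ≤ 1. -/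
open ComplexOrder

/-- KKT-based rank result: if W, Y ⪰ 0 with Y·W = 0 and (α+η)I = θH + Y, where
α+η > 0, θ ≥ 0, and rank(H) ≤ 1, then rank(W) ≤ 1. -/
theorem rank_le_one_of_kkt (N : ℕ) (W Y H : Matrix (Fin N) (Fin N) ℂ)
    (hW : W.PosSemidef) (hY : Y.PosSemidef) (hH : H.IsHermitian) (hHrank : H.rank ≤ 1)
    (α η θ : ℝ) (hα : 0 ≤ α) (hη : 0 ≤ η) (hαη : 0 < α + η) (hθ : 0 ≤ θ)
    (hcs : Y * W = 0)
    (hstat : ((α + η : ℝ) : ℂ) • (1 : Matrix (Fin N) (Fin N) ℂ) = ((θ : ℝ) : ℂ) • H + Y) :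
    W.rank ≤ 1 := by
  have hne : ((α + η : ℝ) : ℂ) ≠ 0 := by
    exact_mod_cast ne_of_gt hαη
  -- multiply stationarity by W on the right
  have h1 : ((α + η : ℝ) : ℂ) • W = ((θ : ℝ) : ℂ) • (H * W) := by
    have := congrArg (· * W) hstat
    simpa [add_mul, Matrix.smul_mul, hcs, Matrix.mul_assoc] using this
  have h2 : W = (((α + η : ℝ) : ℂ)⁻¹ * ((θ : ℝ) : ℂ)) • (H * W) := by
    rw [mul_smul, ← h1, smul_smul, inv_mul_cancel₀ hne, one_smul]
  calc W.rank = ((((α + η : ℝ) : ℂ)⁻¹ * ((θ : ℝ) : ℂ)) • (H * W)).rank := by rw [← h2]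
    _ = (((((α + η : ℝ) : ℂ)⁻¹ * ((θ : ℝ) : ℂ)) • (1 : Matrix (Fin N) (Fin N) ℂ)) * (H * W)).rank := by
        rw [Matrix.smul_mul, one_mul]
    _ ≤ (H * W).rank := Matrix.rank_mul_le_right _ _
    _ ≤ H.rank := Matrix.rank_mul_le_left _ _
    _ ≤ 1 := hHrank
end
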